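/- Let φ ∈ L²(ℝ) and suppose the shift-invariant space S(φ) generated by the integer translates of φ is (1/n)ℤ-invariant for some integer n > 1. Then for every interval I ⊆ ℝ of length n, |{ω ∈ I : φ̂(ω) = 0}| ≥ n − 1. In particular, φ̂ vanishes on a set of infinite Lebesgue measure. -/

import Mathlib

open MeasureTheory FourierTransform

noncomputable section

/-- The space `L²(ℝ)` of complex-valued square-integrable functions. -/
abbrev L2 := Lp ℂ 2 (volume : Measure ℝ)

/-- The translation operator `T_a f (x) = f (x - a)` on `L²(ℝ)`. -/
def Tr (a : ℝ) : L2 → L2 :=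
  Lp.compMeasurePreserving (fun x => x - a) (measurePreserving_sub_right volume a)

/-- `F` is the Fourier–Plancherel transform on `L²(ℝ)`: a unitary that agrees with the
classical Fourier integral `f̂(ω) = ∫ f(x) e^{-2πiωx} dx` on integrable functions. -/
def IsFourierTransform (F : L2 ≃ₗᵢ[ℂ] L2) : Prop :=
  ∀ f : L2, Integrable (f : ℝ → ℂ) volume → (F f : ℝ → ℂ) =ᵐ[volume] 𝓕 (f : ℝ → ℂ)

/-- The shift-invariant space generated by `f`: the closed span of integer translates. -/
def SIS (f : L2) : Set L2 :=
  closure (Submodule.span ℂ {g : L2 | ∃ j : ℤ, g = Tr (j : ℝ) f} : Set L2)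

/-!
Under the Fourier transform, integer translates become multiplication by `1`-periodic functions,
so every `g ∈ S(φ)` satisfies `ĝ = lim pₘ φ̂` a.e. along a subsequence, with `pₘ` `1`-periodic.
For `g = T_{1/n} φ` we have `ĝ(ω) = e^{-2πiω/n} φ̂(ω)`; at a.e. `ω` where `φ̂(ω)` and `φ̂(ω + j)`
are both nonzero, periodicity of `pₘ` forces `e^{-2πiω/n} = e^{-2πi(ω+j)/n}`, i.e. `n ∣ j`.
Hence for a.e. `ω` at most one of `φ̂(ω), φ̂(ω + 1), …, φ̂(ω + n - 1)` is nonzero, and folding an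
interval of length `n` onto one of length `1` shows that `φ̂ ≠ 0` on a set of measure at most `1`
in it.
-/

open Filter Topology Function Set

def modulationFactor (a ω : ℝ) : ℂ := 𝐞 (-(a * ω))

lemma norm_modulationFactor (a ω : ℝ) : ‖modulationFactor a ω‖ = 1 :=
  Circle.norm_coe _

lemma continuous_modulationFactor (a : ℝ) : Continuous (modulationFactor a) :=
  continuous_subtype_val.comp (Real.continuous_fourierChar.comp (by fun_prop))

lemma modulationFactor_add (a x y : ℝ) :
    modulationFactor a (x + y) = modulationFactor a x * modulationFactor a y := by
  simp only [modulationFactor, mul_add, neg_add, AddChar.map_add_eq_mul, Circle.coe_mul]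

lemma modulationFactor_eq_one_iff (a ω : ℝ) :
    modulationFactor a ω = 1 ↔ ∃ m : ℤ, a * ω = m := by
  have h2π : 2 * Real.pi ≠ 0 := by positivity
  rw [modulationFactor, Circle.coe_eq_one, Real.fourierChar_apply', Circle.exp_eq_one]
  constructor
  · rintro ⟨m, hm⟩
    refine ⟨-m, ?_⟩
    have := mul_right_cancel₀ h2π ((mul_comm _ _).trans hm)
    push_cast
    linarith
  · rintro ⟨m, hm⟩
    exact ⟨-m, by rw [hm]; push_cast; ring⟩

lemma periodic_modulationFactor_intCast (j : ℤ) : Periodic (modulationFactor j) 1 := by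
  intro ω
  rw [modulationFactor_add, (modulationFactor_eq_one_iff j 1).2 ⟨j, mul_one _⟩, mul_one]

lemma natCast_dvd_of_modulationFactor_eq_one {n : ℕ} (hn : n ≠ 0) {j : ℤ}
    (h : modulationFactor (n : ℝ)⁻¹ j = 1) : (n : ℤ) ∣ j := by
  obtain ⟨m, hm⟩ := (modulationFactor_eq_one_iff _ _).1 h
  refine ⟨m, Int.cast_injective (α := ℝ) ?_⟩
  push_cast
  field_simp at hm
  linarith

lemma memLp_modulationFactor_mul (a : ℝ) (f : L2) :
    MemLp (fun ω => modulationFactor a ω * f ω) 2 volume :=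
  (Lp.memLp f).congr_norm
    ((continuous_modulationFactor a).aestronglyMeasurable.mul (Lp.aestronglyMeasurable f))
    (.of_forall fun ω => by simp [norm_modulationFactor])

def modulation (a : ℝ) (f : L2) : L2 := (memLp_modulationFactor_mul a f).toLp

lemma coeFn_modulation (a : ℝ) (f : L2) :
    modulation a f =ᵐ[volume] fun ω => modulationFactor a ω * f ω :=
  MemLp.coeFn_toLp _

lemma modulation_sub (a : ℝ) (f g : L2) :
    modulation a (f - g) = modulation a f - modulation a g := by
  apply Lp.ext
  filter_upwards [coeFn_modulation a (f - g), coeFn_modulation a f, coeFn_modulation a g,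
    Lp.coeFn_sub f g, Lp.coeFn_sub (modulation a f) (modulation a g)] with ω h1 h2 h3 h4 h5
  rw [h1, h5, Pi.sub_apply, h2, h3, h4, Pi.sub_apply, mul_sub]

lemma norm_modulation (a : ℝ) (f : L2) : ‖modulation a f‖ = ‖f‖ := by
  rw [modulation, Lp.norm_toLp, Lp.norm_def]
  congr 1
  exact eLpNorm_congr_norm_ae (.of_forall fun ω => by simp [norm_modulationFactor])

lemma isometry_modulation (a : ℝ) : Isometry (modulation a) :=
  .of_dist_eq fun f g => by rw [dist_eq_norm, dist_eq_norm, ← modulation_sub, norm_modulation]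

lemma coeFn_Tr (a : ℝ) (f : L2) : Tr a f =ᵐ[volume] fun x => f (x - a) :=
  Lp.coeFn_compMeasurePreserving f _

lemma fourier_comp_sub_right (f : ℝ → ℂ) (a : ℝ) :
    𝓕 (fun x => f (x - a)) = fun ω => modulationFactor a ω * 𝓕 f ω := by
  ext ω
  simp only [Real.fourier_real_eq]
  rw [← integral_add_right_eq_self (fun v => 𝐞 (-(v * ω)) • f (v - a)) a, ← integral_const_mul]
  congr 1 with v
  simp only [add_sub_cancel_right, Circle.smul_def, smul_eq_mul, modulationFactor, add_mul,
    neg_add, AddChar.map_add_eq_mul, Circle.coe_mul]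
  ring

lemma fourier_congr_ae {E : Type*} [NormedAddCommGroup E] [NormedSpace ℂ E] {f g : ℝ → E}
    (h : f =ᵐ[volume] g) : 𝓕 f = 𝓕 g := by
  ext ω
  simp only [Real.fourier_real_eq]
  exact integral_congr_ae (h.mono fun x hx => by simp only [hx])

lemma dense_setOf_integrable {α E : Type*} [MeasurableSpace α] [NormedAddCommGroup E]
    {μ : Measure α} {p : ENNReal} [Fact (1 ≤ p)] (hp : p ≠ ⊤) :
    Dense {f : Lp E p μ | Integrable f μ} := by
  refine (Lp.simpleFunc.denseRange hp).mono ?_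
  rintro _ ⟨g, rfl⟩
  have hp₀ : p ≠ 0 := (lt_of_lt_of_le zero_lt_one Fact.out).ne'
  exact ((SimpleFunc.memLp_iff_integrable hp₀ hp).1 (Lp.simpleFunc.memLp g)).congr
    (Lp.simpleFunc.toSimpleFunc_eq_toFun g)

lemma IsFourierTransform.map_Tr {F : L2 ≃ₗᵢ[ℂ] L2} (hF : IsFourierTransform F) (a : ℝ)
    (f : L2) : F (Tr a f) = modulation a (F f) := by
  have hclosed : IsClosed {f : L2 | F (Tr a f) = modulation a (F f)} :=
    isClosed_eq (F.continuous.comp (Lp.isometry_compMeasurePreserving _).continuous)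
      ((isometry_modulation a).continuous.comp F.continuous)
  refine (dense_setOf_integrable (E := ℂ) (μ := volume) (p := 2) ENNReal.ofNat_ne_top).induction
    (fun f hf => ?_) hclosed f
  have hTr := coeFn_Tr a f
  apply Lp.ext
  filter_upwards [hF _ ((hf.comp_sub_right a).congr hTr.symm), hF f hf,
    coeFn_modulation a (F f)] with ω h1 h2 h3
  rw [h1, h3, h2, fourier_congr_ae hTr, fourier_comp_sub_right]

lemma Tr_zero (f : L2) : Tr 0 f = f := by
  apply Lp.ext
  filter_upwards [coeFn_Tr 0 f] with x hx
  rw [hx, sub_zero]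

lemma self_mem_SIS (f : L2) : f ∈ SIS f :=
  subset_closure (Submodule.subset_span ⟨0, by rw [Int.cast_zero, Tr_zero]⟩)

lemma IsFourierTransform.exists_periodic_mul_of_mem_span {F : L2 ≃ₗᵢ[ℂ] L2}
    (hF : IsFourierTransform F) {φ g : L2}
    (hg : g ∈ Submodule.span ℂ {g : L2 | ∃ j : ℤ, g = Tr (j : ℝ) φ}) :
    ∃ p : ℝ → ℂ, Periodic p 1 ∧ F g =ᵐ[volume] fun ω => p ω * F φ ω := by
  induction hg using Submodule.span_induction with
  | mem x hx =>
    obtain ⟨j, rfl⟩ := hx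
    exact ⟨modulationFactor j, periodic_modulationFactor_intCast j,
      hF.map_Tr _ φ ▸ coeFn_modulation _ _⟩
  | zero =>
    refine ⟨0, fun _ => rfl, ?_⟩
    filter_upwards [map_zero F ▸ Lp.coeFn_zero ℂ 2 volume] with ω hω
    rw [hω, Pi.zero_apply, zero_mul]
  | add x y _ _ hx hy =>
    obtain ⟨p, hp, hpx⟩ := hx
    obtain ⟨q, hq, hqy⟩ := hy
    refine ⟨p + q, hp.add hq, ?_⟩
    filter_upwards [map_add F x y ▸ Lp.coeFn_add (F x) (F y), hpx, hqy] with ω h h1 h2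
    rw [h, Pi.add_apply, h1, h2, Pi.add_apply, add_mul]
  | smul c x _ hx =>
    obtain ⟨p, hp, hpx⟩ := hx
    refine ⟨c • p, hp.smul c, ?_⟩
    filter_upwards [map_smul F c x ▸ Lp.coeFn_smul c (F x), hpx] with ω h h1
    rw [h, Pi.smul_apply, h1, Pi.smul_apply, smul_eq_mul, smul_eq_mul, mul_assoc]

lemma IsFourierTransform.exists_periodic_tendsto_of_mem_SIS {F : L2 ≃ₗᵢ[ℂ] L2}
    (hF : IsFourierTransform F) {φ g : L2} (hg : g ∈ SIS φ) :
    ∃ p : ℕ → ℝ → ℂ, (∀ m, Periodic (p m) 1) ∧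
      ∀ᵐ ω, Tendsto (fun m => p m ω * F φ ω) atTop (𝓝 (F g ω)) := by
  obtain ⟨x, hx, hxg⟩ := mem_closure_iff_seq_limit.1 hg
  choose p hp hpx using fun m => hF.exists_periodic_mul_of_mem_span (hx m)
  obtain ⟨ns, -, hns⟩ :=
    (tendstoInMeasure_of_tendsto_Lp ((F.continuous.tendsto g).comp hxg)).exists_seq_tendsto_ae
  refine ⟨p ∘ ns, fun m => hp (ns m), ?_⟩
  filter_upwards [hns, ae_all_iff.2 fun m => hpx (ns m)] with ω hω hpω
  exact hω.congr hpω

lemma ae_eq_add_intCast_of_tendsto_periodic_mul {p : ℕ → ℝ → ℂ} {ψ q : ℝ → ℂ}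
    (hp : ∀ m, Periodic (p m) 1)
    (h : ∀ᵐ ω, Tendsto (fun m => p m ω * ψ ω) atTop (𝓝 (q ω * ψ ω))) (j : ℤ) :
    ∀ᵐ ω, ψ ω ≠ 0 → ψ (ω + j) ≠ 0 → q (ω + j) = q ω := by
  have hj := (measurePreserving_add_right volume (j : ℝ)).quasiMeasurePreserving.ae h
  filter_upwards [h, hj] with ω h0 hj hψ0 hψj
  have hlim : ∀ {x : ℝ}, ψ x ≠ 0 → Tendsto (fun m => p m x * ψ x) atTop (𝓝 (q x * ψ x)) →
      Tendsto (fun m => p m x) atTop (𝓝 (q x)) := fun {x} hx hlim => by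
    simpa only [mul_div_cancel_right₀ _ hx] using hlim.div_const (ψ x)
  refine tendsto_nhds_unique ((hlim hψj hj).congr fun m => ?_) (hlim hψ0 h0)
  simpa using (hp m).int_mul j ω

lemma IsFourierTransform.ae_natCast_dvd_of_mem_SIS {F : L2 ≃ₗᵢ[ℂ] L2}
    (hF : IsFourierTransform F) {φ : L2} {n : ℕ} (hn : n ≠ 0)
    (hφ : Tr (n : ℝ)⁻¹ φ ∈ SIS φ) (j : ℤ) :
    ∀ᵐ ω, F φ ω ≠ 0 → F φ (ω + j) ≠ 0 → (n : ℤ) ∣ j := by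
  obtain ⟨p, hp, hlim⟩ := hF.exists_periodic_tendsto_of_mem_SIS hφ
  have hlim' : ∀ᵐ ω, Tendsto (fun m => p m ω * F φ ω) atTop
      (𝓝 (modulationFactor (n : ℝ)⁻¹ ω * F φ ω)) := by
    filter_upwards [hlim, hF.map_Tr _ φ ▸ coeFn_modulation _ (F φ)] with ω hω h
    rwa [← h]
  filter_upwards [ae_eq_add_intCast_of_tendsto_periodic_mul hp hlim' j] with ω h h0 hj
  refine natCast_dvd_of_modulationFactor_eq_one hn
    (mul_left_cancel₀ (a := modulationFactor (n : ℝ)⁻¹ ω) ?_ ?_)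
  · exact fun h0 => by simpa [h0] using norm_modulationFactor (n : ℝ)⁻¹ ω
  · rw [mul_one, ← modulationFactor_add, h h0 hj]

lemma volume_inter_Ico_le_sum_preimage_add (s : Set ℝ) (a : ℝ) (n : ℕ) :
    volume (s ∩ Ico a (a + n)) ≤
      ∑ k ∈ Finset.range n, volume ((· + (k : ℝ)) ⁻¹' s ∩ Ico a (a + 1)) := by
  calc volume (s ∩ Ico a (a + n))
      ≤ volume (⋃ k ∈ Finset.range n,
          (· + -(k : ℝ)) ⁻¹' ((· + (k : ℝ)) ⁻¹' s ∩ Ico a (a + 1))) := by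
        refine measure_mono fun x ⟨hxs, hax, hxa⟩ => ?_
        have h0 : 0 ≤ x - a := sub_nonneg.2 hax
        refine mem_biUnion (x := ⌊x - a⌋₊) ?_ ⟨?_, ?_, ?_⟩
        · exact Finset.mem_coe.2 (Finset.mem_range.2 ((Nat.floor_lt h0).2 (by linarith)))
        · simpa using hxs
        · linarith [Nat.floor_le h0]
        · linarith [Nat.lt_floor_add_one (x - a)]
    _ ≤ _ := measure_biUnion_finset_le _ _
    _ = _ := by simp only [measure_preimage_add_right]

lemma volume_inter_Ico_le_one {s : Set ℝ} (hs : NullMeasurableSet s) {n : ℕ}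
    (h : ∀ j : ℤ, ∀ᵐ ω, ω ∈ s → ω + j ∈ s → (n : ℤ) ∣ j) (a : ℝ) :
    volume (s ∩ Ico a (a + n)) ≤ 1 := by
  set A : ℕ → Set ℝ := fun k => (· + (k : ℝ)) ⁻¹' s ∩ Ico a (a + 1)
  have hA : ∀ k, NullMeasurableSet (A k) := fun k =>
    (hs.preimage (measurePreserving_add_right volume (k : ℝ)).quasiMeasurePreserving).inter
      measurableSet_Ico.nullMeasurableSet
  have hdisj : (Finset.range n : Set ℕ).Pairwise (AEDisjoint volume on A) := by
    intro k hk l hl hkl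
    simp only [Finset.coe_range, mem_Iio] at hk hl
    have hkl' : ¬ (n : ℤ) ∣ (l : ℤ) - k := fun hdvd => hkl <| by
      have := Int.eq_zero_of_abs_lt_dvd hdvd (abs_lt.2 ⟨by omega, by omega⟩)
      omega
    refine measure_eq_zero_iff_ae_notMem.2 ?_
    filter_upwards [(measurePreserving_add_right volume (k : ℝ)).quasiMeasurePreserving.ae
      (h ((l : ℤ) - k))] with ω hω ⟨⟨hωk, _⟩, hωl, _⟩
    refine hkl' (hω hωk ?_)
    simpa [add_assoc] using hωl
  calc volume (s ∩ Ico a (a + n))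
      ≤ ∑ k ∈ Finset.range n, volume (A k) := volume_inter_Ico_le_sum_preimage_add s a n
    _ = volume (⋃ k ∈ Finset.range n, A k) := (measure_biUnion_finset₀ hdisj fun k _ => hA k).symm
    _ ≤ volume (Ico a (a + 1)) :=
        measure_mono (iUnion₂_subset fun k _ => inter_subset_right)
    _ = 1 := by simp

lemma ofReal_sub_one_le_volume_inter_Ioo {s : Set ℝ} (hs : NullMeasurableSet s) {a L : ℝ}
    (h : volume (sᶜ ∩ Ico a (a + L)) ≤ 1) :
    ENNReal.ofReal (L - 1) ≤ volume (s ∩ Ioo a (a + L)) := by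
  rw [ENNReal.ofReal_sub _ zero_le_one, ENNReal.ofReal_one, tsub_le_iff_right]
  calc ENNReal.ofReal L = volume (Ioo a (a + L)) := by rw [Real.volume_Ioo, add_sub_cancel_left]
    _ = volume (Ioo a (a + L) ∩ s) + volume (Ioo a (a + L) \ s) :=
        (measure_inter_add_sdiff₀ _ hs).symm
    _ ≤ volume (s ∩ Ioo a (a + L)) + 1 := by
        rw [inter_comm]
        gcongr
        refine (measure_mono ?_).trans h
        exact fun x hx => ⟨hx.2, hx.1.1.le, hx.1.2⟩

lemma volume_eq_top_of_forall_le_volume_inter_Ioo {s : Set ℝ} (hs : NullMeasurableSet s)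
    {c L : ℝ} (hc : 0 < c) (h : ∀ a, ENNReal.ofReal c ≤ volume (s ∩ Ioo a (a + L))) :
    volume s = ⊤ := by
  have hdisj : Pairwise (Disjoint on fun m : ℤ => Ioo ((m : ℝ) * L) ((m : ℝ) * L + L)) := by
    simpa only [zero_add, zsmul_eq_mul, Int.cast_add, Int.cast_one, add_one_mul] using
      pairwise_disjoint_Ioo_add_zsmul (0 : ℝ) L
  refine top_le_iff.1 ?_
  calc ⊤ = ∑' _ : ℤ, ENNReal.ofReal c :=
        (ENNReal.tsum_const_eq_top_of_ne_zero (ENNReal.ofReal_pos.2 hc).ne').symm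
    _ ≤ ∑' m : ℤ, volume (s ∩ Ioo ((m : ℝ) * L) ((m : ℝ) * L + L)) :=
        ENNReal.tsum_le_tsum fun m => h _
    _ ≤ volume (⋃ m : ℤ, s ∩ Ioo ((m : ℝ) * L) ((m : ℝ) * L + L)) :=
        tsum_meas_le_meas_iUnion_of_disjoint₀ _
          (fun m => hs.inter measurableSet_Ioo.nullMeasurableSet)
          fun m m' hm => ((hdisj hm).mono inter_subset_right inter_subset_right).aedisjoint
    _ ≤ volume s := measure_mono (iUnion_subset fun m => inter_subset_left)

/-- If `S(φ)` is `(1/n)ℤ`-invariant for some `n > 1`, then on every interval of length `n`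
the Fourier transform `φ̂` vanishes on a set of measure at least `n - 1`; in particular
`φ̂` vanishes on a set of infinite Lebesgue measure. -/
theorem stmt16 (F : L2 ≃ₗᵢ[ℂ] L2) (hF : IsFourierTransform F)
    (φ : L2) (n : ℕ) (hn : 1 < n)
    (hninv : ∀ f ∈ SIS φ, ∀ j : ℤ, Tr ((j : ℝ) / n) f ∈ SIS φ) :
    (∀ a : ℝ, ENNReal.ofReal ((n : ℝ) - 1) ≤
        volume ({ω : ℝ | (F φ : ℝ → ℂ) ω = 0} ∩ Set.Ioo a (a + n))) ∧
    volume {ω : ℝ | (F φ : ℝ → ℂ) ω = 0} = ⊤ := by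
  have hZ : NullMeasurableSet {ω : ℝ | (F φ : ℝ → ℂ) ω = 0} :=
    ((Lp.stronglyMeasurable (F φ)).measurable (measurableSet_singleton 0)).nullMeasurableSet
  have hφ : Tr (n : ℝ)⁻¹ φ ∈ SIS φ := by simpa using hninv φ (self_mem_SIS φ) 1
  have hvol (a : ℝ) : ENNReal.ofReal ((n : ℝ) - 1) ≤
      volume ({ω : ℝ | (F φ : ℝ → ℂ) ω = 0} ∩ Ioo a (a + n)) :=
    ofReal_sub_one_le_volume_inter_Ioo hZ
      (volume_inter_Ico_le_one hZ.compl (hF.ae_natCast_dvd_of_mem_SIS (by omega) hφ) a)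
  exact ⟨hvol, volume_eq_top_of_forall_le_volume_inter_Ioo hZ
    (sub_pos.2 (by exact_mod_cast hn)) hvol⟩
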